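/- arXiv:2502.17412 — 2 statements merged into one kernel-verified Lean document; each statement's English description precedes it below -/
import Mathlib

section
/- Let P and Q be real symmetric d × d matrices such that both P and P + Q are positive semi-definite. Then ‖√(P+Q) − √P‖ ≤ 3·√‖Q‖, where √M denotes the unique positive semi-definite square root of a positive semi-definite matrix M, and ‖·‖ denotes the operator (spectral) norm. -/
/-!
Write `A = √(P + Q)` and `B = √P`, so that `Q = A² - B² = A (A - B) + (A - B) B`.
If `v` is an eigenvector of the self-adjoint operator `A - B` with eigenvalue `μ`, then
`⟪v, Q v⟫ = μ (⟪v, A v⟫ + ⟪v, B v⟫)`, while `μ ‖v‖² = ⟪v, A v⟫ - ⟪v, B v⟫` has absolute value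
at most `⟪v, A v⟫ + ⟪v, B v⟫` by positivity of `A` and `B`. Hence `μ² ≤ ‖Q‖`, and since the
norm of a self-adjoint operator is its spectral radius, `‖A - B‖ ≤ √‖Q‖`.
-/

open Matrix

open scoped ComplexOrder in
/-- The square root of a positive semidefinite matrix, as defined in the older Mathlib. -/
noncomputable def Matrix.PosSemidef.sqrt {n 𝕜 : Type*} [Fintype n] [RCLike 𝕜] [DecidableEq n]
    {A : Matrix n n 𝕜} (hA : A.PosSemidef) : Matrix n n 𝕜 :=
  hA.1.eigenvectorUnitary.1 * diagonal ((↑) ∘ (√·) ∘ hA.1.eigenvalues) *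
  (star hA.1.eigenvectorUnitary : Matrix n n 𝕜)

/-- Operator (spectral) norm of a real square matrix, via its action on Euclidean space. -/
noncomputable def opNorm {d : ℕ} (M : Matrix (Fin d) (Fin d) ℝ) : ℝ :=
  ‖Matrix.toEuclideanCLM (𝕜 := ℝ) M‖

open scoped ComplexOrder

namespace Matrix.PosSemidef

variable {n 𝕜 : Type*} [Fintype n] [RCLike 𝕜] [DecidableEq n] {A : Matrix n n 𝕜}

theorem sqrt_eq_conjStarAlgAut (hA : A.PosSemidef) :
    hA.sqrt = Unitary.conjStarAlgAut 𝕜 _ hA.1.eigenvectorUnitary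
      (diagonal ((↑) ∘ (√·) ∘ hA.1.eigenvalues)) :=
  rfl

theorem posSemidef_sqrt (hA : A.PosSemidef) : hA.sqrt.PosSemidef := by
  rw [sqrt_eq_conjStarAlgAut, Unitary.conjStarAlgAut_apply, star_eq_conjTranspose]
  refine PosSemidef.mul_mul_conjTranspose_same (posSemidef_diagonal_iff.mpr fun i => ?_) _
  simp [Real.sqrt_nonneg]

theorem sqrt_mul_self (hA : A.PosSemidef) : hA.sqrt * hA.sqrt = A := by
  conv_rhs => rw [hA.1.spectral_theorem]
  rw [sqrt_eq_conjStarAlgAut, ← map_mul, diagonal_mul_diagonal]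
  congr with i
  simp [← RCLike.ofReal_mul, Real.mul_self_sqrt (hA.eigenvalues_nonneg i)]

theorem isPositive_toEuclideanCLM (hA : A.PosSemidef) :
    (toEuclideanCLM (n := n) (𝕜 := 𝕜) A).IsPositive :=
  isPositive_toEuclideanLin_iff.mpr hA

end Matrix.PosSemidef

open Module.End RCLike

namespace ContinuousLinearMap

variable {𝕜 E : Type*} [RCLike 𝕜] [NormedAddCommGroup E] [InnerProductSpace 𝕜 E]

local notation "⟪" x ", " y "⟫" => inner 𝕜 x y

theorem norm_le_of_forall_hasEigenvalue [FiniteDimensional 𝕜 E] {T : E →L[𝕜] E}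
    (hT : (T : E →ₗ[𝕜] E).IsSymmetric) {t : ℝ} (ht : 0 ≤ t)
    (h : ∀ μ, HasEigenvalue (T : E →ₗ[𝕜] E) μ → ‖μ‖ ≤ t) : ‖T‖ ≤ t := by
  have := FiniteDimensional.complete 𝕜 E
  have hρ : spectralRadius 𝕜 T ≤ ENNReal.ofReal t := iSup₂_le fun μ hμ => by
    rw [spectrum_eq, ← hasEigenvalue_iff_mem_spectrum] at hμ
    exact (ENNReal.le_ofReal_iff_toReal_le ENNReal.coe_ne_top ht).mpr (h μ hμ)
  rw [T.spectralRadius_eq_nnnorm hT.isSelfAdjoint] at hρ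
  exact (ENNReal.le_ofReal_iff_toReal_le ENNReal.coe_ne_top ht).mp hρ

theorem IsPositive.norm_sq_le_of_hasEigenvalue_sub {A B : E →L[𝕜] E} (hA : A.IsPositive)
    (hB : B.IsPositive) {μ : 𝕜} (hμ : HasEigenvalue ((A - B : E →L[𝕜] E) : E →ₗ[𝕜] E) μ) :
    ‖μ‖ ^ 2 ≤ ‖A * A - B * B‖ := by
  obtain ⟨v, hv⟩ := hμ.exists_hasEigenvector
  have hAB : ((A - B : E →L[𝕜] E) : E →ₗ[𝕜] E).IsSymmetric := hA.isSymmetric.sub hB.isSymmetric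
  obtain ⟨r, rfl⟩ : ∃ r : ℝ, (r : 𝕜) = μ :=
    ⟨re μ, conj_eq_iff_re.mp (hAB.conj_eigenvalue_eq_self hμ)⟩
  have hv' : (A - B) v = (r : 𝕜) • v := hv.apply_eq_smul
  set a := re ⟪v, A v⟫
  set b := re ⟪v, B v⟫
  have ha : 0 ≤ a := hA.re_inner_nonneg_right v
  have hb : 0 ≤ b := hB.re_inner_nonneg_right v
  have hdiff : r * ‖v‖ ^ 2 = a - b := by
    have := congrArg re (congrArg (inner 𝕜 v) hv')
    simpa [inner_sub_right, inner_smul_right, inner_self_eq_norm_sq_to_K] using this.symm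
  have hQ : re ⟪v, (A * A - B * B) v⟫ = r * (a + b) := by
    have hsplit : (A * A - B * B) v = A ((A - B) v) + (A - B) (B v) := by
      simp only [_root_.sub_apply, map_sub]; abel
    have hsym : ⟪(A - B) v, B v⟫ = ⟪v, (A - B) (B v)⟫ := hAB v (B v)
    rw [hsplit, inner_add_right, ← hsym, hv']
    simp [inner_smul_left, inner_smul_right, mul_add, a, b]
  have hQle : |re ⟪v, (A * A - B * B) v⟫| ≤ ‖A * A - B * B‖ * ‖v‖ ^ 2 := by
    grw [abs_re_le_norm, norm_inner_le_norm, le_opNorm]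
    exact le_of_eq (by ring)
  have hv0 : 0 < ‖v‖ ^ 2 := pow_pos (norm_pos_iff.mpr hv.2) 2
  have habs : |r| * ‖v‖ ^ 2 ≤ a + b := by
    rw [← abs_of_pos hv0, ← abs_mul, hdiff]
    exact abs_sub_le_iff.mpr ⟨by linarith, by linarith⟩
  rw [norm_ofReal, sq_abs]
  refine le_of_mul_le_mul_right ?_ hv0
  calc r ^ 2 * ‖v‖ ^ 2 = |r| * (|r| * ‖v‖ ^ 2) := by rw [← mul_assoc, ← sq, sq_abs]
    _ ≤ |r| * (a + b) := by gcongr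
    _ = |re ⟪v, (A * A - B * B) v⟫| := by rw [hQ, abs_mul, abs_of_nonneg (add_nonneg ha hb)]
    _ ≤ ‖A * A - B * B‖ * ‖v‖ ^ 2 := hQle

theorem IsPositive.norm_sub_sq_le [FiniteDimensional 𝕜 E] {A B : E →L[𝕜] E} (hA : A.IsPositive)
    (hB : B.IsPositive) : ‖A - B‖ ^ 2 ≤ ‖A * A - B * B‖ := by
  have hle : ‖A - B‖ ≤ √‖A * A - B * B‖ :=
    norm_le_of_forall_hasEigenvalue (hA.isSymmetric.sub hB.isSymmetric) (Real.sqrt_nonneg _)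
      fun μ hμ => Real.le_sqrt (norm_nonneg _) (norm_nonneg _) |>.mpr <|
        hA.norm_sq_le_of_hasEigenvalue_sub hB hμ
  exact (Real.le_sqrt (norm_nonneg _) (norm_nonneg _)).mp hle

end ContinuousLinearMap

theorem sqrt_gap_general {d : ℕ} (P Q : Matrix (Fin d) (Fin d) ℝ)
    (hP : P.PosSemidef) (hPQ : (P + Q).PosSemidef) :
    opNorm (hPQ.sqrt - hP.sqrt) ≤ 3 * Real.sqrt (opNorm Q) := by
  have key := hPQ.posSemidef_sqrt.isPositive_toEuclideanCLM.norm_sub_sq_le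
    hP.posSemidef_sqrt.isPositive_toEuclideanCLM
  rw [← map_mul, ← map_mul, ← map_sub, hPQ.sqrt_mul_self, hP.sqrt_mul_self, ← map_sub,
    add_sub_cancel_left] at key
  have hle := (Real.le_sqrt (norm_nonneg _) (norm_nonneg _)).mpr key
  unfold opNorm
  linarith [Real.sqrt_nonneg ‖toEuclideanCLM (𝕜 := ℝ) Q‖]

/-- **Square-root gap.** If `P` and `P + Q` are positive semi-definite (and `Q` symmetric),
then `‖√(P+Q) − √P‖ ≤ 3·√‖Q‖`. -/
theorem sqrt_gap {d : ℕ} (P Q : Matrix (Fin d) (Fin d) ℝ)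
    (hQsymm : Q.IsSymm) (hP : P.PosSemidef) (hPQ : (P + Q).PosSemidef) :
    opNorm (hPQ.sqrt - hP.sqrt) ≤ 3 * Real.sqrt (opNorm Q) :=
  sqrt_gap_general P Q hP hPQ
end

section
/- Let n ≥ 1 and let 0 ≤ t_1 < t_2 < … < t_m ≤ 1 be real numbers such that for each j there exists ℓ ∈ {1, …, n} with t_j · 2^ℓ · ℓ⁴ ∈ ℤ. Define complex vectors v_0, …, v_{2^n − 1} ∈ ℂ^m by (v_k)_j = exp(2πi·k·t_j), and let W = Re( (1/2^n) · Σ_{k=0}^{2^n − 1} v_k v_k^† ) be the entrywise real part, where v_k^† is the conjugate transpose. Then there is a universal constant C such that ‖W‖ ≤ C·n^{10}, where ‖·‖ denotes the operator norm of the real symmetric m × m matrix W. -/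
open Matrix Complex

/-!
The `(j, j')` entry of `W` is `Re K_N(t_j - t_j')`, where `N = 2^n` and
`K_N(θ) = N⁻¹ Σ_{k<N} e^{2πikθ}` is the normalized Dirichlet kernel, so `W` is symmetric and, by
the Schur test, `‖W‖` is at most the largest absolute row sum. Fix a row `j` and a level
`ℓ ≤ n` with `t_j 2^ℓ ℓ⁴ ∈ ℤ`, and group the columns `j'` by such a level `b`. Within a group the differences `t_j - t_j'` are distinct
multiples of `1/D` in `[-1, 1]`, where `D = 2^n ℓ⁴ b⁴`; since `K_N` is `1`-periodic, their kernel
values add up to at most twice `Σ_{r<D} |K_N(r/D)|` plus one. Jordan's inequality gives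
`|K_N(x)| ≤ 1 / (2N x(1-x))` on `(0, 1)`, and splitting `1/(x(1-x)) = 1/x + 1/(1-x)` turns this
sum into a harmonic sum, at most `1 + (D/N)(1 + log D) = O(n^9)`. There are `n` groups.
-/

open Finset
open scoped Real

noncomputable def dirichletMean (N : ℕ) (θ : ℝ) : ℂ :=
  (N : ℂ)⁻¹ * ∑ k ∈ range N, exp (2 * π * I * k * θ)

lemma exp_two_pi_I_nat_mul (k : ℕ) (θ : ℝ) :
    exp (2 * π * I * k * θ) = exp (2 * π * I * θ) ^ k := by
  rw [← Complex.exp_nat_mul]; ring_nf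

lemma norm_exp_two_pi_I_mul (θ : ℝ) : ‖exp (2 * π * I * θ)‖ = 1 := by
  rw [← norm_exp_I_mul_ofReal (2 * π * θ)]; push_cast; ring_nf

lemma norm_exp_two_pi_I_mul_sub_one (θ : ℝ) :
    ‖exp (2 * π * I * θ) - 1‖ = 2 * |Real.sin (π * θ)| := by
  have h := norm_exp_I_mul_ofReal_sub_one (2 * π * θ)
  push_cast at h
  rw [show 2 * π * I * θ = I * (2 * π * θ) by ring, h, norm_mul, Real.norm_eq_abs,
    Real.norm_eq_abs]
  ring_nf

lemma dirichletMean_periodic (N : ℕ) : Function.Periodic (dirichletMean N) 1 := fun θ => by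
  simp only [dirichletMean, exp_two_pi_I_nat_mul]
  rw [ofReal_add, ofReal_one, mul_add_one, Complex.exp_periodic]

lemma dirichletMean_neg (N : ℕ) (θ : ℝ) :
    dirichletMean N (-θ) = starRingEnd ℂ (dirichletMean N θ) := by
  simp only [dirichletMean, map_mul, map_sum, map_inv₀, map_natCast, ← exp_conj, conj_I,
    conj_ofReal, map_ofNat, ofReal_neg]
  congr 1; refine sum_congr rfl fun k _ => ?_; ring_nf

lemma dirichletMean_sub (N : ℕ) (a b : ℝ) :
    dirichletMean N (a - b) = (N : ℂ)⁻¹ * ∑ k ∈ range N,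
      exp (2 * π * I * k * a) * starRingEnd ℂ (exp (2 * π * I * k * b)) := by
  simp only [dirichletMean, ← exp_conj, ← Complex.exp_add, map_mul, conj_I, conj_ofReal,
    map_natCast, map_ofNat, ofReal_sub]
  congr 1; refine sum_congr rfl fun k _ => ?_; ring_nf

lemma norm_dirichletMean_neg (N : ℕ) (θ : ℝ) :
    ‖dirichletMean N (-θ)‖ = ‖dirichletMean N θ‖ := by
  rw [dirichletMean_neg, RCLike.norm_conj]

lemma norm_dirichletMean_le_one (N : ℕ) (θ : ℝ) : ‖dirichletMean N θ‖ ≤ 1 := by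
  rcases N.eq_zero_or_pos with rfl | hN
  · simp [dirichletMean]
  calc ‖dirichletMean N θ‖ ≤ (N : ℝ)⁻¹ * ∑ k ∈ range N, ‖exp (2 * π * I * k * θ)‖ := by
        rw [dirichletMean, norm_mul, norm_inv, Complex.norm_natCast]
        gcongr
        exact norm_sum_le _ _
    _ = 1 := by simp [exp_two_pi_I_nat_mul, norm_exp_two_pi_I_mul, hN.ne']

lemma norm_geom_sum_le_of_norm_eq_one {ζ : ℂ} (hζ : ‖ζ‖ = 1) (hζ1 : ζ ≠ 1) (N : ℕ) :
    ‖∑ k ∈ range N, ζ ^ k‖ ≤ 2 / ‖ζ - 1‖ := by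
  rw [geom_sum_eq hζ1, norm_div]
  gcongr
  calc ‖ζ ^ N - 1‖ ≤ ‖ζ ^ N‖ + ‖(1 : ℂ)‖ := norm_sub_le _ _
    _ = 2 := by rw [norm_pow, hζ]; norm_num

lemma norm_dirichletMean_le_inv_abs_sin (N : ℕ) {θ : ℝ} (hθ : Real.sin (π * θ) ≠ 0) :
    ‖dirichletMean N θ‖ ≤ (N * |Real.sin (π * θ)|)⁻¹ := by
  have hζ1 : exp (2 * π * I * θ) ≠ 1 := fun h => by
    simpa [h, hθ] using norm_exp_two_pi_I_mul_sub_one θ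
  rw [dirichletMean, norm_mul, norm_inv, Complex.norm_natCast, mul_inv]
  simp only [exp_two_pi_I_nat_mul]
  gcongr
  refine (norm_geom_sum_le_of_norm_eq_one (norm_exp_two_pi_I_mul θ) hζ1 N).trans_eq ?_
  rw [norm_exp_two_pi_I_mul_sub_one]; field_simp

lemma two_mul_mul_one_sub_le_sin_pi_mul {x : ℝ} (h0 : 0 ≤ x) (h1 : x ≤ 1) :
    2 * x * (1 - x) ≤ Real.sin (π * x) := by
  wlog hx : x ≤ 1 / 2 generalizing x
  · have h := this (x := 1 - x) (by linarith) (by linarith) (by linarith)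
    rw [show π * (1 - x) = π - π * x by ring, Real.sin_pi_sub] at h
    linarith
  calc 2 * x * (1 - x) ≤ 2 / π * (π * x) := by
        rw [← mul_assoc, div_mul_cancel₀ 2 Real.pi_ne_zero]; nlinarith
    _ ≤ Real.sin (π * x) := Real.mul_le_sin (by positivity) (by nlinarith [Real.pi_pos])

lemma norm_dirichletMean_le_of_mem_Ioo (N : ℕ) {x : ℝ} (hx : x ∈ Set.Ioo 0 1) :
    ‖dirichletMean N x‖ ≤ (1 / x + 1 / (1 - x)) / (2 * N) := by
  obtain ⟨h0, h1⟩ := hx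
  rcases N.eq_zero_or_pos with rfl | hN
  · simp [dirichletMean]
  have hsin := two_mul_mul_one_sub_le_sin_pi_mul h0.le h1.le
  have hpos : 0 < 2 * x * (1 - x) := by nlinarith
  calc ‖dirichletMean N x‖ ≤ (N * |Real.sin (π * x)|)⁻¹ :=
        norm_dirichletMean_le_inv_abs_sin N (by linarith)
    _ ≤ (N * (2 * x * (1 - x)))⁻¹ := by
        gcongr; exact hsin.trans (le_abs_self _)
    _ = (1 / x + 1 / (1 - x)) / (2 * N) := by
        field_simp [(by linarith : 1 - x ≠ 0)]; ring

lemma sum_Ico_inv_le_one_add_log (D : ℕ) : ∑ r ∈ Ico 1 D, (r : ℝ)⁻¹ ≤ 1 + Real.log D := by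
  calc ∑ r ∈ Ico 1 D, (r : ℝ)⁻¹ ≤ ∑ r ∈ Icc 1 D, (r : ℝ)⁻¹ :=
        sum_le_sum_of_subset_of_nonneg Ico_subset_Icc_self fun _ _ _ => by positivity
    _ = harmonic D := by simp [harmonic_eq_sum_Icc]
    _ ≤ 1 + Real.log D := harmonic_le_one_add_log D

lemma sum_Ico_inv_sub_eq (D : ℕ) :
    ∑ r ∈ Ico 1 D, ((D : ℝ) - r)⁻¹ = ∑ r ∈ Ico 1 D, (r : ℝ)⁻¹ := by
  have h := sum_Ico_reflect (fun r : ℕ => (r : ℝ)⁻¹) 1 (Nat.le_succ D)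
  simp only [add_tsub_cancel_left, Nat.add_sub_cancel] at h
  rw [← h]
  refine sum_congr rfl fun r hr => ?_
  rw [Nat.cast_sub (mem_Ico.mp hr).2.le]

lemma sum_range_norm_dirichletMean_le (N : ℕ) {D : ℕ} (hD : 0 < D) :
    ∑ r ∈ range D, ‖dirichletMean N (r / D)‖ ≤ 1 + D / N * (1 + Real.log D) := by
  have hDR : (0 : ℝ) < D := Nat.cast_pos.mpr hD
  have hterm : ∀ r ∈ Ico 1 D,
      ‖dirichletMean N (r / D)‖ ≤ D / (2 * N) * ((r : ℝ)⁻¹ + ((D : ℝ) - r)⁻¹) := by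
    intro r hr
    obtain ⟨h1, h2⟩ := mem_Ico.mp hr
    have hr0 : (0 : ℝ) < r := by exact_mod_cast h1
    have hrD : (r : ℝ) < D := by exact_mod_cast h2
    refine (norm_dirichletMean_le_of_mem_Ioo N
      ⟨by positivity, (div_lt_one hDR).mpr hrD⟩).trans_eq ?_
    field_simp [(by linarith : (D : ℝ) - r ≠ 0)]
  rw [range_eq_Ico, sum_eq_sum_Ico_succ_bot hD]
  calc _ ≤ 1 + ∑ r ∈ Ico 1 D, D / (2 * N) * ((r : ℝ)⁻¹ + ((D : ℝ) - r)⁻¹) :=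
        add_le_add (norm_dirichletMean_le_one _ _) (sum_le_sum hterm)
    _ = 1 + D / N * ∑ r ∈ Ico 1 D, (r : ℝ)⁻¹ := by
        rw [← mul_sum, sum_add_distrib, sum_Ico_inv_sub_eq]; ring
    _ ≤ 1 + D / N * (1 + Real.log D) := by gcongr; exact sum_Ico_inv_le_one_add_log D

lemma exists_nat_eq_div_sub_one {θ : ℝ} (hθ : |θ| ≤ 1) {D : ℕ} (hD : 0 < D)
    (hθD : ∃ z : ℤ, θ * D = z) : ∃ r : ℕ, r ≤ 2 * D ∧ θ = r / D - 1 := by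
  obtain ⟨z, hz⟩ := hθD
  have hDR : (0 : ℝ) < D := Nat.cast_pos.mpr hD
  have hzD : |(z : ℝ)| ≤ D := by
    rw [← hz, abs_mul, Nat.abs_cast]; exact mul_le_of_le_one_left hDR.le hθ
  obtain ⟨hz0, hz1⟩ := abs_le.mp (show |z| ≤ D by exact_mod_cast hzD)
  refine ⟨(z + D).toNat, by omega, ?_⟩
  have hr : ((z + D).toNat : ℝ) = z + D := by exact_mod_cast Int.toNat_of_nonneg (by omega)
  rw [hr, eq_sub_iff_add_eq, eq_div_iff hDR.ne']
  linarith

theorem Function.Periodic.sum_comp_le_of_grid {ι : Type*} {f : ℝ → ℝ}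
    (hf : Function.Periodic f 1) (hf0 : ∀ x, 0 ≤ f x) (s : Finset ι) {θ : ι → ℝ}
    (hθ : Set.InjOn θ s) (hθ1 : ∀ i ∈ s, |θ i| ≤ 1) {D : ℕ} (hD : 0 < D)
    (hθD : ∀ i ∈ s, ∃ z : ℤ, θ i * D = z) :
    ∑ i ∈ s, f (θ i) ≤ 2 * ∑ r ∈ range D, f (r / D) + f 0 := by
  choose! r hr hθr using fun i hi => exists_nat_eq_div_sub_one (hθ1 i hi) hD (hθD i hi)
  have hrinj : Set.InjOn r s := fun i hi j hj h => hθ hi hj (by rw [hθr i hi, hθr j hj, h])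
  have hDR : (D : ℝ) ≠ 0 := by positivity
  calc ∑ i ∈ s, f (θ i) = ∑ k ∈ s.image r, f (k / D) := by
        rw [sum_image hrinj]; exact sum_congr rfl fun i hi => by rw [hθr i hi, hf.sub_eq]
    _ ≤ ∑ k ∈ range (D + D + 1), f (k / D) := by
        refine sum_le_sum_of_subset_of_nonneg (fun k hk => ?_) fun _ _ _ => hf0 _
        obtain ⟨i, hi, rfl⟩ := mem_image.mp hk
        have := hr i hi
        rw [mem_range]; omega
    _ = 2 * ∑ r ∈ range D, f (r / D) + f 0 := by
        rw [sum_range_succ, sum_range_add, two_mul]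
        congr 1
        · congr 1
          refine sum_congr rfl fun k _ => ?_
          rw [Nat.cast_add, add_div, div_self hDR, add_comm, hf]
        · rw [show ((D + D : ℕ) : ℝ) / D = (2 : ℕ) * 1 by push_cast; field_simp; ring,
            hf.nat_mul_eq]

theorem Matrix.norm_toEuclideanCLM_le_of_sum_abs_le {n : Type*} [Fintype n] [DecidableEq n]
    (M : Matrix n n ℝ) {B : ℝ} (hB : 0 ≤ B) (hrow : ∀ i, ∑ j, |M i j| ≤ B)
    (hcol : ∀ j, ∑ i, |M i j| ≤ B) : ‖toEuclideanCLM (𝕜 := ℝ) M‖ ≤ B := by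
  refine ContinuousLinearMap.opNorm_le_bound _ hB fun x => ?_
  refine (sq_le_sq₀ (norm_nonneg _) (by positivity)).mp ?_
  rw [EuclideanSpace.norm_sq_eq, mul_pow, EuclideanSpace.norm_sq_eq]
  simp only [ofLp_toEuclideanCLM, mulVec, dotProduct, Real.norm_eq_abs, sq_abs]
  have hCS : ∀ i, (∑ j, M i j * x j) ^ 2 ≤ (∑ j, |M i j|) * ∑ j, |M i j| * x j ^ 2 := fun i =>
    sum_sq_le_sum_mul_sum_of_sq_le_mul _ (fun _ _ => abs_nonneg _) (fun _ _ => by positivity)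
      fun j _ => le_of_eq (by rw [mul_pow, ← sq_abs (M i j)]; ring)
  calc ∑ i, (∑ j, M i j * x j) ^ 2 ≤ ∑ i, B * ∑ j, |M i j| * x j ^ 2 :=
        sum_le_sum fun i _ => (hCS i).trans (by gcongr; exact hrow i)
    _ = B * ∑ j, (∑ i, |M i j|) * x j ^ 2 := by
        rw [← mul_sum, sum_comm]; simp_rw [sum_mul]
    _ ≤ B * ∑ j, B * x j ^ 2 := by gcongr with j; exact hcol j
    _ = B ^ 2 * ∑ j, x j ^ 2 := by rw [← mul_sum]; ring

lemma exists_int_mul_eq_of_dvd {x : ℝ} {a D : ℕ} (hx : ∃ z : ℤ, x * a = z) (h : a ∣ D) :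
    ∃ z : ℤ, x * D = z := by
  obtain ⟨z, hz⟩ := hx
  obtain ⟨c, rfl⟩ := h
  exact ⟨z * c, by push_cast; rw [← hz]; ring⟩

lemma exists_int_sub_mul_eq {x y : ℝ} {ℓ b n : ℕ} (hℓ : ℓ ≤ n) (hb : b ≤ n)
    (hx : ∃ z : ℤ, x * 2 ^ ℓ * ℓ ^ 4 = z) (hy : ∃ z : ℤ, y * 2 ^ b * b ^ 4 = z) :
    ∃ z : ℤ, (x - y) * (2 ^ n * (ℓ ^ 4 * b ^ 4) : ℕ) = z := by
  have hdvd_x : 2 ^ ℓ * ℓ ^ 4 ∣ 2 ^ n * (ℓ ^ 4 * b ^ 4) :=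
    Nat.mul_dvd_mul (pow_dvd_pow 2 hℓ) (dvd_mul_right _ _)
  have hdvd_y : 2 ^ b * b ^ 4 ∣ 2 ^ n * (ℓ ^ 4 * b ^ 4) :=
    Nat.mul_dvd_mul (pow_dvd_pow 2 hb) (dvd_mul_left _ _)
  obtain ⟨zx, hzx⟩ :=
    exists_int_mul_eq_of_dvd (by push_cast; simpa only [mul_assoc] using hx) hdvd_x
  obtain ⟨zy, hzy⟩ :=
    exists_int_mul_eq_of_dvd (by push_cast; simpa only [mul_assoc] using hy) hdvd_y
  exact ⟨zx - zy, by push_cast at hzx hzy ⊢; rw [sub_mul, hzx, hzy]⟩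

lemma sum_norm_dirichletMean_le_of_grid {ι : Type*} {N P : ℕ} (hN : 0 < N) (hP : 0 < P)
    (s : Finset ι) {θ : ι → ℝ} (hθ : Set.InjOn θ s) (hθ1 : ∀ i ∈ s, |θ i| ≤ 1)
    (hθD : ∀ i ∈ s, ∃ z : ℤ, θ i * (N * P : ℕ) = z) :
    ∑ i ∈ s, ‖dirichletMean N (θ i)‖ ≤ 3 + 2 * P * (1 + Real.log (N * P : ℕ)) := by
  have hD : 0 < N * P := Nat.mul_pos hN hP
  calc ∑ i ∈ s, ‖dirichletMean N (θ i)‖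
      ≤ 2 * ∑ r ∈ range (N * P), ‖dirichletMean N (r / (N * P : ℕ))‖ + ‖dirichletMean N 0‖ :=
        ((dirichletMean_periodic N).comp _).sum_comp_le_of_grid (fun _ => norm_nonneg _) s hθ
          hθ1 hD hθD
    _ ≤ 2 * (1 + (N * P : ℕ) / N * (1 + Real.log (N * P : ℕ))) + 1 := by
        gcongr
        · exact sum_range_norm_dirichletMean_le N hD
        · exact norm_dirichletMean_le_one N 0
    _ = 3 + 2 * P * (1 + Real.log (N * P : ℕ)) := by
        rw [Nat.cast_mul, mul_div_cancel_left₀ _ (by positivity)]; ring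

lemma log_le_of_le_two_pow {D k : ℕ} (h : D ≤ 2 ^ k) : Real.log D ≤ k := by
  rcases D.eq_zero_or_pos with rfl | hD
  · simp
  calc Real.log D ≤ Real.log (2 ^ k) := Real.log_le_log (by positivity) (by exact_mod_cast h)
    _ = k * Real.log 2 := by rw [Real.log_pow]
    _ ≤ k := mul_le_of_le_one_right (by positivity) (by linarith [Real.log_two_lt_d9])

lemma sum_norm_dirichletMean_sub_le {ι : Type*} [Fintype ι] {n : ℕ} {t : ι → ℝ}
    (ht : Function.Injective t) (ht_mem : ∀ j, t j ∈ Set.Icc (0 : ℝ) 1)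
    (ht_den : ∀ j, ∃ ℓ ∈ Icc 1 n, ∃ z : ℤ, t j * 2 ^ ℓ * ℓ ^ 4 = (z : ℝ)) (i : ι) :
    ∑ j, ‖dirichletMean (2 ^ n) (t i - t j)‖ ≤ 23 * (n : ℝ) ^ 10 := by
  choose lev hlev z hz using ht_den
  obtain ⟨hℓ1, hℓn⟩ := mem_Icc.mp (hlev i)
  have hn : (1 : ℝ) ≤ n := by exact_mod_cast hℓ1.trans hℓn
  rw [← sum_fiberwise_of_maps_to (fun j _ => hlev j)]
  calc _ ≤ ∑ b ∈ Icc 1 n, 23 * (n : ℝ) ^ 9 := sum_le_sum fun b hb => ?_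
    _ = 23 * (n : ℝ) ^ 10 := by simp; ring
  obtain ⟨hb1, hbn⟩ := mem_Icc.mp hb
  have hP : ((lev i ^ 4 * b ^ 4 : ℕ) : ℝ) ≤ (n : ℝ) ^ 8 := by
    calc ((lev i ^ 4 * b ^ 4 : ℕ) : ℝ) ≤ (n : ℝ) ^ 4 * n ^ 4 := by push_cast; gcongr
      _ = (n : ℝ) ^ 8 := by ring
  have hlog : Real.log (2 ^ n * (lev i ^ 4 * b ^ 4) : ℕ) ≤ 9 * n := by
    have hℓ := (hℓn.trans_lt n.lt_two_pow_self).le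
    have hb := (hbn.trans_lt n.lt_two_pow_self).le
    refine (log_le_of_le_two_pow (k := 9 * n) ?_).trans_eq (by push_cast; ring)
    calc 2 ^ n * (lev i ^ 4 * b ^ 4) ≤ 2 ^ n * ((2 ^ n) ^ 4 * (2 ^ n) ^ 4) := by gcongr
      _ = 2 ^ (9 * n) := by ring
  calc ∑ j ∈ univ.filter (lev · = b), ‖dirichletMean (2 ^ n) (t i - t j)‖
      ≤ 3 + 2 * ((lev i ^ 4 * b ^ 4 : ℕ) : ℝ) *
          (1 + Real.log (2 ^ n * (lev i ^ 4 * b ^ 4) : ℕ)) :=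
        sum_norm_dirichletMean_le_of_grid (by positivity)
          (Nat.mul_pos (pow_pos hℓ1 4) (pow_pos hb1 4)) _
          (fun j _ k _ h => ht (sub_right_injective h))
          (fun j _ => abs_sub_le_of_nonneg_of_le (ht_mem i).1 (ht_mem i).2 (ht_mem j).1
            (ht_mem j).2)
          fun j hj => exists_int_sub_mul_eq hℓn hbn ⟨z i, hz i⟩
            ((mem_filter.mp hj).2 ▸ ⟨z j, hz j⟩)
    _ ≤ 3 + 2 * (n : ℝ) ^ 8 * (1 + 9 * n) := by gcongr
    _ ≤ 23 * (n : ℝ) ^ 9 := by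
        nlinarith [pow_le_pow_right₀ hn (show 8 ≤ 9 by norm_num), one_le_pow₀ (n := 9) hn]

/-- There is a universal constant `C` such that: for any `n ≥ 1` and points
`0 ≤ t₁ < … < t_m ≤ 1`, each of the form `q/(2^ℓ·ℓ⁴)` for some `1 ≤ ℓ ≤ n`, the real part `W` of
`(1/2^n)·Σ_{k<2^n} v_k v_k†`, where `(v_k)_j = exp(2πi·k·t_j)`, satisfies `‖W‖ ≤ C·n^10`. -/
theorem dft_operator_norm_bound :
    ∃ C : ℝ, 0 < C ∧
      ∀ (n m : ℕ), 1 ≤ n → ∀ t : Fin m → ℝ,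
        StrictMono t →
        (∀ j, 0 ≤ t j ∧ t j ≤ 1) →
        (∀ j, ∃ ℓ ∈ Finset.Icc 1 n, ∃ z : ℤ, t j * 2 ^ ℓ * ℓ ^ 4 = (z : ℝ)) →
        opNorm (Matrix.of fun j j' : Fin m =>
            ((2 ^ n : ℂ)⁻¹ * ∑ k ∈ Finset.range (2 ^ n),
              Complex.exp (2 * Real.pi * Complex.I * k * (t j)) *
                (starRingEnd ℂ) (Complex.exp (2 * Real.pi * Complex.I * k * (t j')))).re)
          ≤ C * (n : ℝ) ^ 10 := by
  refine ⟨23, by norm_num, fun n m _ t ht_mono ht_mem ht_den => ?_⟩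
  set W : Matrix (Fin m) (Fin m) ℝ := Matrix.of _
  have hW : ∀ i j, W i j = (dirichletMean (2 ^ n) (t i - t j)).re := fun i j => by
    simp [W, dirichletMean_sub]
  have hrow := sum_norm_dirichletMean_sub_le ht_mono.injective ht_mem ht_den
  refine W.norm_toEuclideanCLM_le_of_sum_abs_le (by positivity) (fun i => ?_) (fun j => ?_)
  · refine (sum_le_sum fun j _ => ?_).trans (hrow i)
    rw [hW]; exact abs_re_le_norm _
  · refine (sum_le_sum fun i _ => ?_).trans (hrow j)
    rw [hW, ← neg_sub]; exact (abs_re_le_norm _).trans_eq (norm_dirichletMean_neg _ _)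
end
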